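/- arXiv:2312.11394 — 7 statements merged into one kernel-verified Lean document; each statement's English description precedes it below -/
import Mathlib

section
/- A frieze of type A₂ is a function F : Fin 2 × ℤ → ℤ with all values ≥ 1 satisfying F(0,k)·F(0,k+1) = 1 + F(1,k) and F(1,k)·F(1,k+1) = 1 + F(0,k+1) for all k ∈ ℤ. Every frieze of type A₂ is 5-periodic: F(i, k+5) = F(i,k) for all i, k. -/
/-- Every positive integral frieze of type A₂ is 5-periodic. -/
theorem stmt_4 (F : Fin 2 × ℤ → ℤ) (hpos : ∀ i k, 1 ≤ F (i, k))
    (h0 : ∀ k : ℤ, F (0, k) * F (0, k + 1) = 1 + F (1, k))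
    (h1 : ∀ k : ℤ, F (1, k) * F (1, k + 1) = 1 + F (0, k + 1)) :
    ∀ i k, F (i, k + 5) = F (i, k) := by
  -- Key lemmas: F(1,k+2) = F(0,k) and F(0,k+3) = F(1,k)
  have key : ∀ k : ℤ, F (1, k + 2) = F (0, k) ∧ F (0, k + 3) = F (1, k) := by
    intro k
    set a := F (0, k) with ha
    set b := F (1, k) with hb
    set p := F (0, k + 1) with hp
    set q := F (1, k + 1) with hq
    set r := F (0, k + 2) with hr
    set s := F (1, k + 2) with hs
    set t := F (0, k + 3) with ht
    have e12 : (k : ℤ) + 1 + 1 = k + 2 := by ring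
    have e23 : (k : ℤ) + 2 + 1 = k + 3 := by ring
    have eq1 : a * p = 1 + b := h0 k
    have eq2 : b * q = 1 + p := h1 k
    have eq3 : p * r = 1 + q := by have := h0 (k + 1); rwa [e12] at this
    have eq4 : q * s = 1 + r := by have := h1 (k + 1); rwa [e12] at this
    have eq5 : r * t = 1 + s := by have := h0 (k + 2); rwa [e23] at this
    have hp1 : (1 : ℤ) ≤ p := hpos 0 (k + 1)
    have hr1 : (1 : ℤ) ≤ r := hpos 0 (k + 2)
    have hpne : p ≠ 0 := by omega
    have hp1ne : (1 + p) ≠ 0 := by omega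
    have hrne : r ≠ 0 := by omega
    have hrb : r * b = a + 1 := by
      have h : p * (r * b) = p * (a + 1) := by
        linear_combination b * eq3 + eq2 - eq1
      exact mul_left_cancel₀ hpne h
    have hsa : s = a := by
      have h : (1 + p) * s = (1 + p) * a := by
        linear_combination b * eq4 + hrb - s * eq2 - eq1
      exact mul_left_cancel₀ hp1ne h
    have htb : t = b := by
      have h : r * t = r * b := by
        linear_combination eq5 - hrb + hsa
      exact mul_left_cancel₀ hrne h
    exact ⟨hsa, htb⟩
  intro i k
  fin_cases i
  · have h1 := (key (k + 2)).2
    have h2 := (key k).1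
    have e : (k : ℤ) + 2 + 3 = k + 5 := by ring
    rw [e] at h1
    simpa using h1.trans h2
  · have h1 := (key (k + 3)).1
    have h2 := (key k).2
    have e : (k : ℤ) + 3 + 2 = k + 5 := by ring
    rw [e] at h1
    simpa using h1.trans h2
end

section
/- There are finitely many friezes of type A₂; concretely, every entry F(i,k) of a type A₂ frieze satisfies F(i,k) ≤ 3. -/
lemma key_A2 (a b c d : ℤ) (ha : 1 ≤ a) (hb : 1 ≤ b) (hc : 1 ≤ c) (hd : 1 ≤ d)
    (e1 : a * c = 1 + b) (e2 : b * d = 1 + c) : a ≤ 3 := by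
  have L : a * b ≤ 1 + a + b := by
    have h : a * b * d = a + 1 + b := by
      have : a * (b * d) = a * (1 + c) := by rw [e2]
      nlinarith [this]
    nlinarith [mul_pos (lt_of_lt_of_le one_pos ha) (lt_of_lt_of_le one_pos hb)]
  by_contra h
  push_neg at h
  have h4 : 4 ≤ a := h
  nlinarith

/-- Every entry of a positive integral frieze of type A₂ is at most 3. -/
theorem stmt_5 (F : Fin 2 × ℤ → ℤ) (hpos : ∀ i k, 1 ≤ F (i, k))
    (h0 : ∀ k : ℤ, F (0, k) * F (0, k + 1) = 1 + F (1, k))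
    (h1 : ∀ k : ℤ, F (1, k) * F (1, k + 1) = 1 + F (0, k + 1)) :
    ∀ i k, F (i, k) ≤ 3 := by
  intro i k
  fin_cases i
  · exact key_A2 (F (0, k)) (F (1, k)) (F (0, k + 1)) (F (1, k + 1))
      (hpos 0 k) (hpos 1 k) (hpos 0 (k + 1)) (hpos 1 (k + 1)) (h0 k) (h1 k)
  · exact key_A2 (F (1, k)) (F (0, k + 1)) (F (1, k + 1)) (F (0, k + 2))
      (hpos 1 k) (hpos 0 (k + 1)) (hpos 1 (k + 1)) (hpos 0 (k + 2)) (h1 k)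
      (by have := h0 (k + 1); rw [show k + 1 + 1 = k + 2 by ring] at this; exact this)
end

section
/- Let F : Fin 2 × ℤ → ℤ≥1 be a frieze of type A₂ (satisfying F(0,k)F(0,k+1) = 1 + F(1,k) and F(1,k)F(1,k+1) = 1 + F(0,k+1)). Then for each row i, the product of any 5 consecutive entries ∏_{k=m}^{m+4} F(i,k) is bounded above by 2^10. -/
/-- Interleaved sequence of the two frieze rows. -/
def yF (F : Fin 2 × ℤ → ℤ) (n : ℤ) : ℤ :=
  if n % 2 = 0 then F (0, n / 2) else F (1, (n - 1) / 2)

lemma yF_pos (F : Fin 2 × ℤ → ℤ) (hpos : ∀ i k, 1 ≤ F (i, k)) (n : ℤ) :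
    1 ≤ yF F n := by
  unfold yF; split <;> apply hpos

lemma yF_rel (F : Fin 2 × ℤ → ℤ)
    (h0 : ∀ k : ℤ, F (0, k) * F (0, k + 1) = 1 + F (1, k))
    (h1 : ∀ k : ℤ, F (1, k) * F (1, k + 1) = 1 + F (0, k + 1)) (n : ℤ) :
    yF F n * yF F (n + 2) = 1 + yF F (n + 1) := by
  rcases Int.even_or_odd n with ⟨k, hk⟩ | ⟨k, hk⟩ <;> subst hk <;> unfold yF
  · rw [if_pos (by omega), if_pos (by omega), if_neg (by omega)]
    have d1 : (k + k) / 2 = k := by omega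
    have d2 : (k + k + 2) / 2 = k + 1 := by omega
    have d3 : (k + k + 1 - 1) / 2 = k := by omega
    rw [d1, d2, d3]; exact h0 k
  · rw [if_neg (by omega), if_neg (by omega), if_pos (by omega)]
    have d1 : (2 * k + 1 - 1) / 2 = k := by omega
    have d2 : (2 * k + 1 + 2 - 1) / 2 = k + 1 := by omega
    have d3 : (2 * k + 1 + 1) / 2 = k + 1 := by omega
    rw [d1, d2, d3]; exact h1 k

lemma key (y : ℤ → ℤ) (hpos : ∀ n, 1 ≤ y n)
    (hrel : ∀ n, y n * y (n + 2) = 1 + y (n + 1)) (n : ℤ) : y (n + 2) ≤ 3 := by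
  have e1 : n + 1 + 2 = n + 3 := by ring
  have e2 : n + 2 + 2 = n + 4 := by ring
  have e3 : n + 1 + 1 = n + 2 := by ring
  have e4 : n + 2 + 1 = n + 3 := by ring
  have r1 := hrel n
  have r2 := hrel (n + 1); rw [e1, e3] at r2
  have r3 := hrel (n + 2); rw [e2, e4] at r3
  have p0 := hpos n
  have p1 := hpos (n + 1)
  have p2 := hpos (n + 2)
  have p3 := hpos (n + 3)
  have p4 := hpos (n + 4)
  have A : (1 + y (n + 1)) * (1 + y (n + 3)) = y (n + 2) ^ 2 * (y n * y (n + 4)) := by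
    rw [← r1, ← r3]; ring
  have hyn4 : 1 ≤ y n * y (n + 4) := by nlinarith
  have B : y (n + 2) ^ 2 ≤ y (n + 2) ^ 2 * (y n * y (n + 4)) :=
    le_mul_of_one_le_right (sq_nonneg _) hyn4
  have C : y (n + 1) + y (n + 3) ≤ y (n + 2) + 2 := by nlinarith
  have hx2 : y (n + 2) ^ 2 ≤ 2 * y (n + 2) + 4 := by nlinarith
  nlinarith

lemma entry_le (F : Fin 2 × ℤ → ℤ) (hpos : ∀ i k, 1 ≤ F (i, k))
    (h0 : ∀ k : ℤ, F (0, k) * F (0, k + 1) = 1 + F (1, k))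
    (h1 : ∀ k : ℤ, F (1, k) * F (1, k + 1) = 1 + F (0, k + 1))
    (i : Fin 2) (k : ℤ) : F (i, k) ≤ 3 := by
  have hy := key (yF F) (yF_pos F hpos) (yF_rel F h0 h1)
  fin_cases i
  · show F (0, k) ≤ 3
    have h := hy (2 * k - 2)
    rw [show 2 * k - 2 + 2 = 2 * k by ring] at h
    have hv : yF F (2 * k) = F (0, k) := by
      unfold yF
      rw [if_pos (by omega), show 2 * k / 2 = k by omega]
    rwa [hv] at h
  · show F (1, k) ≤ 3
    have h := hy (2 * k - 1)
    rw [show 2 * k - 1 + 2 = 2 * k + 1 by ring] at h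
    have hv : yF F (2 * k + 1) = F (1, k) := by
      unfold yF
      rw [if_neg (by omega), show (2 * k + 1 - 1) / 2 = k by omega]
    rwa [hv] at h

/-- For a positive integral frieze of type A₂, the product of any 5 consecutive
entries in either row is at most 2^10. -/
theorem stmt_6 (F : Fin 2 × ℤ → ℤ) (hpos : ∀ i k, 1 ≤ F (i, k))
    (h0 : ∀ k : ℤ, F (0, k) * F (0, k + 1) = 1 + F (1, k))
    (h1 : ∀ k : ℤ, F (1, k) * F (1, k + 1) = 1 + F (0, k + 1)) :
    ∀ (i : Fin 2) (m : ℤ), ∏ k ∈ Finset.range 5, F (i, m + k) ≤ 2 ^ 10 := by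
  intro i m
  calc ∏ k ∈ Finset.range 5, F (i, m + k)
      ≤ ∏ k ∈ Finset.range 5, (3 : ℤ) := by
        apply Finset.prod_le_prod
        · intro j _; linarith [hpos i (m + j)]
        · intro j _; exact entry_le F hpos h0 h1 i (m + j)
    _ ≤ 2 ^ 10 := by norm_num
end

section
/- Let C be an n×n integer matrix with C_{ii} = 2 and C_{ij} ≤ 0 for i ≠ j, and let F : Fin n × ℤ → ℤ≥1 satisfy the mesh relations F(i,k)·F(i,k+1) = 1 + ∏_{j<i} F(j,k)^{−C_{ij}} · ∏_{j>i} F(j,k+1)^{−C_{ij}}. If F is p-periodic in the second coordinate and a_i denotes (1/p)∑_{k=1}^p log₂ F(i,k), then for every i: 0 < 2a_i + ∑_{j≠i} C_{ij} a_j ≤ 1. -/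
open Finset in
/-- Averaged-logarithm lemma: for a p-periodic positive integral frieze F for a
generalized Cartan matrix C, with a_i the average base-2 logarithm of row i,
every coordinate of C·a lies in (0, 1]. -/
theorem stmt_9 {n : ℕ} (C : Matrix (Fin n) (Fin n) ℤ)
    (hdiag : ∀ i, C i i = 2) (hoff : ∀ i j, i ≠ j → C i j ≤ 0)
    (p : ℕ) (hp : 1 ≤ p) (F : Fin n × ℤ → ℤ)
    (hpos : ∀ i k, 1 ≤ F (i, k))
    (hper : ∀ i (k : ℤ), F (i, k + p) = F (i, k))
    (hmesh : ∀ i (k : ℤ), F (i, k) * F (i, k + 1) =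
      1 + (∏ j ∈ univ.filter (· < i), F (j, k) ^ (-C i j).toNat) *
          (∏ j ∈ univ.filter (i < ·), F (j, k + 1) ^ (-C i j).toNat))
    (a : Fin n → ℝ)
    (ha : ∀ i, a i = (1 / p) * ∑ k ∈ Finset.Icc 1 p, Real.logb 2 (F (i, (k : ℤ)))) :
    ∀ i, 0 < 2 * a i + ∑ j ∈ univ.filter (· ≠ i), (C i j : ℝ) * a j ∧
      2 * a i + ∑ j ∈ univ.filter (· ≠ i), (C i j : ℝ) * a j ≤ 1 := by
  intro i
  have hp0 : (0 : ℝ) < p := by exact_mod_cast Nat.lt_of_lt_of_le Nat.zero_lt_one hp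
  have hF1 : ∀ (j : Fin n) (k : ℤ), (1 : ℝ) ≤ ((F (j, k)) : ℝ) := fun j k => by
    exact_mod_cast hpos j k
  have hF0 : ∀ (j : Fin n) (k : ℤ), (0 : ℝ) < ((F (j, k)) : ℝ) := fun j k =>
    lt_of_lt_of_le one_pos (hF1 j k)
  -- abbreviations
  set L : Fin n → ℤ → ℝ := fun j k => Real.logb 2 ((F (j, k)) : ℝ) with hLdef
  set S : Fin n → ℝ := fun j => ∑ k ∈ Finset.Icc 1 p, L j (k : ℤ) with hSdef
  have haS : ∀ j, a j = S j / p := by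
    intro j
    rw [ha j]
    simp only [hSdef, hLdef]
    ring
  -- reindexing : sums over Icc 1 p as sums over range p
  have e1 : ∀ (f : ℕ → ℝ), ∑ k ∈ Finset.Icc 1 p, f k = ∑ k ∈ Finset.range p, f (k + 1) := by
    intro f
    rw [← Finset.Ico_add_one_right_eq_Icc, Finset.sum_Ico_eq_sum_range]
    simp [add_comm]
  -- shift invariance of the row sums
  have hshift : ∀ (j : Fin n), ∑ k ∈ Finset.Icc 1 p, L j ((k : ℤ) + 1) = S j := by
    intro j
    have h1 : ∑ k ∈ Finset.Icc 1 p, L j ((k : ℤ) + 1)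
        = ∑ k ∈ Finset.range p, L j (((k + 1 : ℕ) : ℤ) + 1) :=
      e1 (fun m => L j ((m : ℤ) + 1))
    have h2 : S j = ∑ k ∈ Finset.range p, L j (((k + 1 : ℕ) : ℤ)) := by
      simp only [hSdef]
      exact e1 (fun m => L j ((m : ℤ)))
    have hA := Finset.sum_range_succ' (fun k : ℕ => L j ((k : ℤ) + 1)) p
    have hB := Finset.sum_range_succ (fun k : ℕ => L j ((k : ℤ) + 1)) p
    have hfp : L j ((p : ℤ) + 1) = L j ((0 : ℤ) + 1) := by
      simp only [hLdef]
      rw [add_comm ((p : ℤ)) 1, hper j 1]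
      norm_num
    push_cast at h1 h2 hA hB
    rw [h1, h2]
    push_cast at hfp
    linarith [hA, hB, hfp]
  -- the real product P k
  set P : ℤ → ℝ := fun k =>
    (∏ j ∈ univ.filter (· < i), ((F (j, k)) : ℝ) ^ (-C i j).toNat) *
    (∏ j ∈ univ.filter (i < ·), ((F (j, k + 1)) : ℝ) ^ (-C i j).toNat) with hPdef
  have hP1 : ∀ k : ℤ, (1 : ℝ) ≤ P k := by
    intro k
    simp only [hPdef]
    have hA : (1 : ℝ) ≤ ∏ j ∈ univ.filter (· < i), ((F (j, k)) : ℝ) ^ (-C i j).toNat := by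
      have := Finset.prod_le_prod (s := univ.filter (· < i))
        (f := fun _ => (1 : ℝ)) (g := fun j => ((F (j, k)) : ℝ) ^ (-C i j).toNat)
        (fun j _ => zero_le_one) (fun j _ => one_le_pow₀ (hF1 j k))
      simpa using this
    have hB : (1 : ℝ) ≤ ∏ j ∈ univ.filter (i < ·), ((F (j, k + 1)) : ℝ) ^ (-C i j).toNat := by
      have := Finset.prod_le_prod (s := univ.filter (i < ·))
        (f := fun _ => (1 : ℝ)) (g := fun j => ((F (j, k + 1)) : ℝ) ^ (-C i j).toNat)
        (fun j _ => zero_le_one) (fun j _ => one_le_pow₀ (hF1 j (k + 1)))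
      simpa using this
    calc (1 : ℝ) = 1 * 1 := by ring
      _ ≤ _ := mul_le_mul hA hB zero_le_one (le_trans zero_le_one hA)
  have hP0 : ∀ k : ℤ, (0 : ℝ) < P k := fun k => lt_of_lt_of_le one_pos (hP1 k)
  -- mesh relation over ℝ
  have meshR : ∀ k : ℤ, ((F (i, k)) : ℝ) * ((F (i, k + 1)) : ℝ) = 1 + P k := by
    intro k
    have h := hmesh i k
    have h' : ((F (i, k) * F (i, k + 1) : ℤ) : ℝ) =
        ((1 + (∏ j ∈ univ.filter (· < i), F (j, k) ^ (-C i j).toNat) *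
          (∏ j ∈ univ.filter (i < ·), F (j, k + 1) ^ (-C i j).toNat) : ℤ) : ℝ) := by
      exact_mod_cast congrArg (fun z : ℤ => (z : ℝ)) h
    push_cast at h'
    simp only [hPdef]
    exact h'
  -- logarithm of P k
  have logP : ∀ k : ℤ, Real.logb 2 (P k) =
      (∑ j ∈ univ.filter (· < i), ((-C i j).toNat : ℝ) * L j k) +
      (∑ j ∈ univ.filter (i < ·), ((-C i j).toNat : ℝ) * L j (k + 1)) := by
    intro k
    simp only [hPdef, hLdef]
    rw [Real.logb_mul, Real.logb_prod, Real.logb_prod]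
    · congr 1 <;> refine Finset.sum_congr rfl fun j _ => ?_ <;> rw [Real.logb_pow]
    · exact fun j _ => ne_of_gt (pow_pos (hF0 j (k + 1)) _)
    · exact fun j _ => ne_of_gt (pow_pos (hF0 j k) _)
    · exact ne_of_gt (Finset.prod_pos fun j _ => pow_pos (hF0 j k) _)
    · exact ne_of_gt (Finset.prod_pos fun j _ => pow_pos (hF0 j (k + 1)) _)
  -- per-column inequalities
  have hkey : ∀ k : ℤ, L i k + L i (k + 1) = Real.logb 2 (1 + P k) := by
    intro k
    simp only [hLdef]
    rw [← Real.logb_mul (ne_of_gt (hF0 i k)) (ne_of_gt (hF0 i (k + 1))), meshR k]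
  have hlb : ∀ k : ℤ, Real.logb 2 (P k) < L i k + L i (k + 1) := by
    intro k
    rw [hkey k]
    exact Real.logb_lt_logb one_lt_two (hP0 k) (by linarith [hP1 k])
  have hub : ∀ k : ℤ, L i k + L i (k + 1) ≤ 1 + Real.logb 2 (P k) := by
    intro k
    rw [hkey k]
    have h2 : Real.logb 2 (1 + P k) ≤ Real.logb 2 (2 * P k) :=
      Real.logb_le_logb_of_le one_lt_two (by linarith [hP1 k]) (by linarith [hP1 k])
    have h3 : Real.logb 2 (2 * P k) = 1 + Real.logb 2 (P k) := by
      rw [Real.logb_mul two_ne_zero (ne_of_gt (hP0 k)), Real.logb_self_eq_one one_lt_two]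
    linarith
  -- summing over one period
  have hne : (Finset.Icc 1 p).Nonempty := ⟨1, Finset.mem_Icc.mpr ⟨le_refl 1, hp⟩⟩
  have hcard : (Finset.Icc 1 p).card = p := by simp
  have sumL : ∑ k ∈ Finset.Icc 1 p, (L i (k : ℤ) + L i ((k : ℤ) + 1)) = 2 * S i := by
    rw [Finset.sum_add_distrib, hshift i]
    simp only [hSdef]
    ring
  have sumQ : ∑ k ∈ Finset.Icc 1 p, Real.logb 2 (P (k : ℤ))
      = ∑ j ∈ univ.filter (· ≠ i), ((-C i j).toNat : ℝ) * S j := by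
    have split : (univ.filter (· ≠ i) : Finset (Fin n)) =
        univ.filter (· < i) ∪ univ.filter (i < ·) := by
      ext j
      simp only [Finset.mem_filter, Finset.mem_union, Finset.mem_univ, true_and]
      exact ne_iff_lt_or_gt
    have hdisj : Disjoint (univ.filter (· < i) : Finset (Fin n)) (univ.filter (i < ·)) := by
      rw [Finset.disjoint_left]
      intro j hj hj'
      simp only [Finset.mem_filter] at hj hj'
      exact absurd hj'.2 (not_lt_of_gt hj.2)
    rw [split, Finset.sum_union hdisj]
    simp only [logP]
    rw [Finset.sum_add_distrib]
    congr 1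
    · rw [Finset.sum_comm]
      refine Finset.sum_congr rfl fun j _ => ?_
      rw [← Finset.mul_sum]
    · rw [Finset.sum_comm]
      refine Finset.sum_congr rfl fun j _ => ?_
      rw [← Finset.mul_sum, hshift j]
  have hQlt : ∑ j ∈ univ.filter (· ≠ i), ((-C i j).toNat : ℝ) * S j < 2 * S i := by
    rw [← sumQ, ← sumL]
    exact Finset.sum_lt_sum_of_nonempty hne fun k _ => hlb (k : ℤ)
  have hQge : 2 * S i ≤ p + ∑ j ∈ univ.filter (· ≠ i), ((-C i j).toNat : ℝ) * S j := by
    rw [← sumQ, ← sumL]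
    calc ∑ k ∈ Finset.Icc 1 p, (L i (k : ℤ) + L i ((k : ℤ) + 1))
        ≤ ∑ k ∈ Finset.Icc 1 p, (1 + Real.logb 2 (P (k : ℤ))) :=
          Finset.sum_le_sum fun k _ => hub (k : ℤ)
      _ = p + ∑ k ∈ Finset.Icc 1 p, Real.logb 2 (P (k : ℤ)) := by
          rw [Finset.sum_add_distrib]
          simp [hcard]
  -- rewrite the goal expression
  have hCm : ∀ j ∈ univ.filter (· ≠ i), (C i j : ℝ) * a j
      = -(((-C i j).toNat : ℝ) * S j) / p := by
    intro j hj
    have hj' : j ≠ i := by simpa using hj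
    have h0 : C i j ≤ 0 := hoff i j hj'.symm
    have htn : (((-C i j).toNat : ℤ)) = -C i j := Int.toNat_of_nonneg (by linarith)
    have hC : ((C i j : ℤ) : ℝ) = -(((-C i j).toNat : ℝ)) := by
      have : (((-C i j).toNat : ℤ) : ℝ) = ((-C i j : ℤ) : ℝ) := by exact_mod_cast htn
      push_cast at this ⊢
      linarith
    rw [haS j, hC]
    ring
  have hexpr : 2 * a i + ∑ j ∈ univ.filter (· ≠ i), (C i j : ℝ) * a j
      = (2 * S i - ∑ j ∈ univ.filter (· ≠ i), ((-C i j).toNat : ℝ) * S j) / p := by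
    rw [haS i, Finset.sum_congr rfl hCm, ← Finset.sum_div, Finset.sum_neg_distrib]
    ring
  constructor
  · rw [hexpr]
    exact div_pos (by linarith) hp0
  · rw [hexpr]
    rw [div_le_one hp0]
    linarith
end

section
/- Let C be an n×n generalized Cartan matrix of finite Dynkin type (C invertible with all entries of C⁻¹ positive, C_{ii}=2, C_{ij} ≤ 0 for i≠j), b_i the i-th row sum of C⁻¹, and F a p-periodic positive integral frieze for C (satisfying the mesh relations). Then every entry satisfies F(i,k) ≤ 2^(p·b_i). -/
/-!
Write `ℓ(i,k) = log F(i,k) ≥ 0` and `L i = ∑_{k<p} ℓ(i,k)`. The product on the right of the mesh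
relation is at least `1`, so `1 + P ≤ 2P` turns the relation into
`ℓ(i,k) + ℓ(i,k+1) ≤ log 2 + ∑_{j<i} (-C i j) ℓ(j,k) + ∑_{j>i} (-C i j) ℓ(j,k+1)`.
Summing over one period, where shifting `k` does not change the sums, gives `(C L)_i ≤ p log 2`
for every `i`. Since `C⁻¹` has nonnegative entries, `L ≤ p log 2 · C⁻¹ 𝟙 = p log 2 · b`, and
`ℓ(i,k) ≤ L i` because every `ℓ` is nonnegative.
-/

open Finset Matrix Real

namespace Function.Periodic

variable {M : Type*} {f : ℤ → M} {p : ℕ}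

theorem sum_range_comp_add_one [AddCancelCommMonoid M] (hf : Periodic f p) :
    ∑ k ∈ range p, f (k + 1) = ∑ k ∈ range p, f k := by
  have h := sum_range_succ' (fun k : ℕ => f k) p
  rw [sum_range_succ, hf.eq] at h
  push_cast at h
  exact (add_right_cancel h).symm

theorem le_sum_range [AddCommMonoid M] [PartialOrder M] [IsOrderedAddMonoid M]
    (hf : Periodic f p) (hp : 0 < p) (hf₀ : 0 ≤ f) (k : ℤ) : f k ≤ ∑ m ∈ range p, f m := by
  obtain ⟨y, ⟨hy₀, hyp⟩, hfy⟩ := hf.exists_mem_Ico₀ (by exact_mod_cast hp) k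
  lift y to ℕ using hy₀
  rw [hfy]
  exact single_le_sum (f := fun m : ℕ => f m) (fun m _ => hf₀ m)
    (mem_range.2 (by exact_mod_cast hyp))

end Function.Periodic

namespace Matrix

variable {ι R : Type*} [Fintype ι]

theorem le_mul_sum_inv_of_mulVec_le [DecidableEq ι] [CommRing R] [PartialOrder R]
    [IsOrderedRing R] {A : Matrix ι ι R} (hA : IsUnit A.det) (hinv : ∀ i j, 0 ≤ A⁻¹ i j)
    {x : ι → R} {c : R} (hx : ∀ i, (A *ᵥ x) i ≤ c) (i : ι) : x i ≤ c * ∑ j, A⁻¹ i j :=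
  calc x i = (A⁻¹ *ᵥ (A *ᵥ x)) i := by rw [mulVec_mulVec, nonsing_inv_mul _ hA, one_mulVec]
    _ = ∑ j, A⁻¹ i j * (A *ᵥ x) j := rfl
    _ ≤ ∑ j, A⁻¹ i j * c := sum_le_sum fun j _ => mul_le_mul_of_nonneg_left (hx j) (hinv i j)
    _ = c * ∑ j, A⁻¹ i j := by rw [← sum_mul, mul_comm]

theorem map_intCast_mulVec_apply_of_cartan [LinearOrder ι] [CommRing R] {C : Matrix ι ι ℤ}
    (hdiag : ∀ i, C i i = 2) (hoff : ∀ i j, i ≠ j → C i j ≤ 0) (x : ι → R) (i : ι) :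
    (C.map (Int.cast : ℤ → R) *ᵥ x) i = 2 * x i -
      (∑ j ∈ univ.filter (· < i), ((-C i j).toNat : R) * x j +
        ∑ j ∈ univ.filter (i < ·), ((-C i j).toNat : R) * x j) := by
  have hsplit : univ.erase i = univ.filter (· < i) ∪ univ.filter (i < ·) := by
    ext j
    simp only [mem_erase, mem_union, mem_filter, mem_univ, and_true, true_and]
    exact ne_iff_lt_or_gt
  have hdisj : Disjoint (univ.filter (· < i)) (univ.filter (i < ·)) :=
    disjoint_filter.2 fun j _ hji hij => lt_asymm hji hij
  have hneg : ∀ j ∈ univ.erase i, (C i j : R) * x j = -(((-C i j).toNat : R) * x j) := by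
    intro j hj
    have hcast : (((-C i j).toNat : ℤ) : R) = -(C i j : R) := by
      rw [Int.toNat_of_nonneg (neg_nonneg.2 (hoff i j (ne_of_mem_erase hj).symm))]; push_cast; rfl
    rw [← Int.cast_natCast, hcast, neg_mul, neg_neg]
  rw [← sum_union hdisj, ← hsplit, sub_eq_add_neg, ← sum_neg_distrib, ← sum_congr rfl hneg,
    mulVec, dotProduct, ← add_sum_erase _ _ (mem_univ i)]
  simp [hdiag]

end Matrix

theorem Real.log_add_log_le_of_mul_eq_one_add {x y P : ℝ} (hx : 0 < x) (hy : 0 < y) (hP : 1 ≤ P)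
    (h : x * y = 1 + P) : log x + log y ≤ log 2 + log P := by
  rw [← log_mul hx.ne' hy.ne', ← log_mul two_ne_zero (by positivity)]
  exact log_le_log (mul_pos hx hy) (by linarith)

theorem Real.log_prod_pow {α : Type*} {s : Finset α} {f : α → ℝ} (e : α → ℕ)
    (hf : ∀ x ∈ s, f x ≠ 0) : log (∏ x ∈ s, f x ^ e x) = ∑ x ∈ s, e x * log (f x) := by
  rw [log_prod fun x hx => pow_ne_zero _ (hf x hx)]
  simp only [log_pow]

section Frieze

variable {n : ℕ} (C : Matrix (Fin n) (Fin n) ℤ) (F : Fin n × ℤ → ℤ)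

def MeshRelation : Prop :=
  ∀ i (k : ℤ), F (i, k) * F (i, k + 1) =
    1 + (∏ j ∈ univ.filter (· < i), F (j, k) ^ (-C i j).toNat) *
      (∏ j ∈ univ.filter (i < ·), F (j, k + 1) ^ (-C i j).toNat)

variable {C F}

theorem MeshRelation.log_add_log_le (hmesh : MeshRelation C F) (hpos : ∀ i k, 1 ≤ F (i, k))
    (i : Fin n) (k : ℤ) :
    log (F (i, k)) + log (F (i, k + 1)) ≤ log 2 +
      (∑ j ∈ univ.filter (· < i), ((-C i j).toNat : ℝ) * log (F (j, k)) +
        ∑ j ∈ univ.filter (i < ·), ((-C i j).toNat : ℝ) * log (F (j, k + 1))) := by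
  have hF : ∀ j k, (0 : ℝ) < F (j, k) := fun j k => by exact_mod_cast hpos j k
  have hprod : ∀ (s : Finset (Fin n)) k,
      1 ≤ ∏ j ∈ s, F (j, k) ^ (-C i j).toNat := fun s k =>
    one_le_prod fun j _ => one_le_pow₀ (hpos j k)
  have hmeshℝ := congrArg (Int.cast : ℤ → ℝ) (hmesh i k)
  push_cast at hmeshℝ
  refine (log_add_log_le_of_mul_eq_one_add (hF i k) (hF i (k + 1)) ?_ hmeshℝ).trans_eq ?_
  · exact_mod_cast one_le_mul_of_one_le_of_one_le (hprod _ k) (hprod _ (k + 1))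
  · rw [log_mul (prod_pos fun j _ => pow_pos (hF j k) _).ne'
      (prod_pos fun j _ => pow_pos (hF j (k + 1)) _).ne',
      log_prod_pow _ fun j _ => (hF j k).ne', log_prod_pow _ fun j _ => (hF j (k + 1)).ne']

theorem MeshRelation.cartan_mulVec_sum_log_le (hmesh : MeshRelation C F)
    (hdiag : ∀ i, C i i = 2) (hoff : ∀ i j, i ≠ j → C i j ≤ 0) (hpos : ∀ i k, 1 ≤ F (i, k))
    {p : ℕ} (hper : ∀ i (k : ℤ), F (i, k + p) = F (i, k)) (i : Fin n) :
    (C.map (Int.cast : ℤ → ℝ) *ᵥ fun j => ∑ k ∈ range p, log (F (j, k))) i ≤ p * log 2 := by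
  have hshift : ∀ j, ∑ k ∈ range p, log (F (j, (k : ℤ) + 1)) = ∑ k ∈ range p, log (F (j, k)) :=
    fun j => Function.Periodic.sum_range_comp_add_one (f := fun k => log (F (j, k)))
      fun k => by simp only [hper]
  have hsum := sum_le_sum fun (k : ℕ) (_ : k ∈ range p) => hmesh.log_add_log_le hpos i k
  rw [sum_add_distrib, hshift, sum_add_distrib, sum_const, card_range, nsmul_eq_mul,
    sum_add_distrib, sum_comm, sum_comm (s := range p)] at hsum
  simp_rw [← mul_sum, hshift] at hsum
  rw [Matrix.map_intCast_mulVec_apply_of_cartan hdiag hoff]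
  linarith

end Frieze

open Finset in
/-- For a generalized Cartan matrix C of finite Dynkin type with bᵢ the row sums
of C⁻¹, every entry of a p-periodic positive integral frieze for C satisfies
F(i,k) ≤ 2^(p·bᵢ). -/
theorem stmt_11 {n : ℕ} (C : Matrix (Fin n) (Fin n) ℤ)
    (hdiag : ∀ i, C i i = 2) (hoff : ∀ i j, i ≠ j → C i j ≤ 0)
    (hC : IsUnit (C.map (Int.cast : ℤ → ℝ)).det)
    (hinv : ∀ i j, 0 < (C.map (Int.cast : ℤ → ℝ))⁻¹ i j)
    (b : Fin n → ℝ) (hb : ∀ i, b i = ∑ j, (C.map (Int.cast : ℤ → ℝ))⁻¹ i j)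
    (p : ℕ) (hp : 1 ≤ p) (F : Fin n × ℤ → ℤ)
    (hpos : ∀ i k, 1 ≤ F (i, k))
    (hper : ∀ i (k : ℤ), F (i, k + p) = F (i, k))
    (hmesh : ∀ i (k : ℤ), F (i, k) * F (i, k + 1) =
      1 + (∏ j ∈ univ.filter (· < i), F (j, k) ^ (-C i j).toNat) *
          (∏ j ∈ univ.filter (i < ·), F (j, k + 1) ^ (-C i j).toNat)) :
    ∀ i (k : ℤ), (F (i, k) : ℝ) ≤ 2 ^ ((p : ℝ) * b i) := by
  intro i k
  have hsum_log : ∑ m ∈ range p, log (F (i, m)) ≤ p * log 2 * b i := by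
    rw [hb]
    exact le_mul_sum_inv_of_mulVec_le hC (fun i j => (hinv i j).le)
      (MeshRelation.cartan_mulVec_sum_log_le hmesh hdiag hoff hpos hper) i
  have hlog_le : log (F (i, k)) ≤ ∑ m ∈ range p, log (F (i, m)) :=
    Function.Periodic.le_sum_range (f := fun k => log (F (i, k))) (fun k => by simp only [hper])
      hp (fun k => log_nonneg (by exact_mod_cast hpos i k)) k
  rw [le_rpow_iff_log_le (by exact_mod_cast hpos i k) two_pos]
  linarith
end

section
/- Let C be a generalized Cartan matrix of finite Dynkin type and F a p-periodic positive integral frieze for C all of whose entries are at least 2. With d_i := ∑_{j≠i} (−C_{ij}) and a_i the average base-2 logarithm of row i, every coordinate i satisfies 0 < 2a_i + ∑_{j≠i} C_{ij}a_j ≤ log₂(1 + 2^{−d_i}). -/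
open Finset Real

private lemma aux_shift (p : ℕ) (hp : 1 ≤ p) (f : ℤ → ℝ) (hf : f (1 + (p : ℤ)) = f 1) :
    ∑ k ∈ Finset.Icc 1 p, f ((k : ℤ) + 1) = ∑ k ∈ Finset.Icc 1 p, f (k : ℤ) := by
  have h1 : ∑ k ∈ Finset.Icc 2 (p + 1), f (k : ℤ) = ∑ k ∈ Finset.Icc 1 p, f ((k : ℤ) + 1) := by
    rw [show (2 : ℕ) = 1 + 1 from rfl, ← Finset.map_add_right_Icc, Finset.sum_map]
    apply Finset.sum_congr rfl
    intro k _
    simp [addRightEmbedding]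
  have h2 : Finset.Icc 1 (p + 1) = (Finset.Ioc 1 (p + 1)).cons 1 Finset.left_notMem_Ioc :=
    Finset.Icc_eq_cons_Ioc (by omega)
  have h3 : Finset.Icc 2 (p + 1) = Finset.Ioc 1 (p + 1) := Finset.Icc_add_one_left_eq_Ioc 1 (p + 1)
  have h4 : ∑ k ∈ Finset.Icc 1 (p + 1), f (k : ℤ)
      = ∑ k ∈ Finset.Icc 1 p, f (k : ℤ) + f ((p : ℤ) + 1) := by
    have := Finset.sum_Icc_succ_top (by omega : 1 ≤ p + 1) (fun k : ℕ => f (k : ℤ))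
    push_cast at this ⊢
    exact this
  have h5 : ∑ k ∈ Finset.Icc 1 (p + 1), f (k : ℤ)
      = f 1 + ∑ k ∈ Finset.Icc 2 (p + 1), f (k : ℤ) := by
    rw [h2, Finset.sum_cons, h3]
    norm_num
  have hfp : f ((p : ℤ) + 1) = f 1 := by rw [add_comm]; exact hf
  rw [← h1]
  have h6 := h4
  rw [h5] at h6
  rw [hfp] at h6
  linarith

open Finset in
/-- Refined averaged-logarithm lemma when all frieze entries are at least 2:
with dᵢ = ∑_{j≠i}(−C_{ij}), every coordinate i satisfies
0 < 2aᵢ + ∑_{j≠i} C_{ij}aⱼ ≤ log₂(1 + 2^(−dᵢ)). -/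
theorem stmt_13 {n : ℕ} (C : Matrix (Fin n) (Fin n) ℤ)
    (hdiag : ∀ i, C i i = 2) (hoff : ∀ i j, i ≠ j → C i j ≤ 0)
    (p : ℕ) (hp : 1 ≤ p) (F : Fin n × ℤ → ℤ)
    (hpos : ∀ i k, 2 ≤ F (i, k))
    (hper : ∀ i (k : ℤ), F (i, k + p) = F (i, k))
    (hmesh : ∀ i (k : ℤ), F (i, k) * F (i, k + 1) =
      1 + (∏ j ∈ univ.filter (· < i), F (j, k) ^ (-C i j).toNat) *
          (∏ j ∈ univ.filter (i < ·), F (j, k + 1) ^ (-C i j).toNat))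
    (a : Fin n → ℝ)
    (ha : ∀ i, a i = (1 / p) * ∑ k ∈ Finset.Icc 1 p, Real.logb 2 (F (i, (k : ℤ))))
    (d : Fin n → ℤ) (hd : ∀ i, d i = ∑ j ∈ univ.filter (· ≠ i), (-C i j)) :
    ∀ i, 0 < 2 * a i + ∑ j ∈ univ.filter (· ≠ i), (C i j : ℝ) * a j ∧
      2 * a i + ∑ j ∈ univ.filter (· ≠ i), (C i j : ℝ) * a j ≤
        Real.logb 2 (1 + 2 ^ (-(d i : ℝ))) := by
  intro i
  have hp0 : (p : ℝ) ≠ 0 := Nat.cast_ne_zero.mpr (by omega)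
  have hFpos : ∀ j k, (0 : ℤ) < F (j, k) := fun j k => lt_of_lt_of_le (by norm_num) (hpos j k)
  have hFposR : ∀ j k, (0 : ℝ) < (F (j, k) : ℝ) := fun j k => by exact_mod_cast hFpos j k
  set N : Fin n → ℕ := fun j => (-C i j).toNat with hN
  have hNval : ∀ j, j ≠ i → ((N j : ℤ)) = -C i j := by
    intro j hj
    exact Int.toNat_of_nonneg (by have := hoff i j (Ne.symm hj); omega)
  set D : ℕ := ∑ j ∈ univ.filter (· ≠ i), N j with hD
  have hdD : d i = (D : ℤ) := by
    rw [hd i, hD]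
    push_cast
    exact Finset.sum_congr rfl fun j hj => (hNval j (by simpa using hj)).symm
  set P : ℤ → ℤ := fun k =>
    (∏ j ∈ univ.filter (· < i), F (j, k) ^ N j) *
    (∏ j ∈ univ.filter (i < ·), F (j, k + 1) ^ N j) with hPdef
  have hmesh' : ∀ k : ℤ, F (i, k) * F (i, k + 1) = 1 + P k := fun k => hmesh i k
  have hsplit : univ.filter (· ≠ i) = univ.filter (· < i) ∪ univ.filter (i < ·) := by
    ext j
    simp only [Finset.mem_filter, Finset.mem_union, Finset.mem_univ, true_and]
    exact ne_iff_lt_or_gt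
  have hdisj : Disjoint (univ.filter (· < i)) (univ.filter (i < ·)) := by
    rw [Finset.disjoint_left]
    intro j hj hj'
    simp only [Finset.mem_filter] at hj hj'
    exact absurd (hj.2.trans hj'.2) (lt_irrefl j)
  have hDsplit : D = (∑ j ∈ univ.filter (· < i), N j) + (∑ j ∈ univ.filter (i < ·), N j) := by
    rw [hD, hsplit, Finset.sum_union hdisj]
  have hPge : ∀ k : ℤ, (2 : ℤ) ^ D ≤ P k := by
    intro k
    rw [hDsplit, pow_add]
    apply mul_le_mul
    · rw [← Finset.prod_pow_eq_pow_sum]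
      exact Finset.prod_le_prod (fun j _ => by positivity)
        (fun j _ => pow_le_pow_left₀ (by norm_num) (hpos j k) _)
    · rw [← Finset.prod_pow_eq_pow_sum]
      exact Finset.prod_le_prod (fun j _ => by positivity)
        (fun j _ => pow_le_pow_left₀ (by norm_num) (hpos j (k + 1)) _)
    · positivity
    · exact Finset.prod_nonneg fun j _ => pow_nonneg (by linarith [hpos j k]) _
  have hPpos : ∀ k : ℤ, (0 : ℤ) < P k := fun k =>
    lt_of_lt_of_le (by positivity) (hPge k)
  have hPposR : ∀ k : ℤ, (0 : ℝ) < (P k : ℝ) := fun k => by exact_mod_cast hPpos k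
  have hPgeR : ∀ k : ℤ, (2 : ℝ) ^ D ≤ (P k : ℝ) := fun k => by exact_mod_cast hPge k
  have hshift : ∀ j : Fin n,
      ∑ k ∈ Finset.Icc 1 p, Real.logb 2 (F (j, (k : ℤ) + 1))
        = ∑ k ∈ Finset.Icc 1 p, Real.logb 2 (F (j, (k : ℤ))) := by
    intro j
    exact aux_shift p hp (fun m => Real.logb 2 (F (j, m)))
      (congrArg (fun z : ℤ => Real.logb 2 (z : ℝ)) (hper j 1))
  have hlogP : ∀ k : ℤ, Real.logb 2 (P k) =
      (∑ j ∈ univ.filter (· < i), (N j : ℝ) * Real.logb 2 (F (j, k))) +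
      (∑ j ∈ univ.filter (i < ·), (N j : ℝ) * Real.logb 2 (F (j, k + 1))) := by
    intro k
    rw [hPdef]
    push_cast
    rw [Real.logb_mul
        (ne_of_gt (Finset.prod_pos fun j _ => pow_pos (hFposR j k) _))
        (ne_of_gt (Finset.prod_pos fun j _ => pow_pos (hFposR j (k + 1)) _)),
      Real.logb_prod _ _ (fun j _ => (pow_pos (hFposR j k) _).ne'),
      Real.logb_prod _ _ (fun j _ => (pow_pos (hFposR j (k + 1)) _).ne')]
    simp [Real.logb_pow]
  have hpa : ∀ j, (p : ℝ) * a j = ∑ k ∈ Finset.Icc 1 p, Real.logb 2 (F (j, (k : ℤ))) := by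
    intro j
    rw [ha j]
    field_simp
  have hSsum : ∑ k ∈ Finset.Icc 1 p, Real.logb 2 (P (k : ℤ))
      = ∑ j ∈ univ.filter (· ≠ i), (N j : ℝ) * ((p : ℝ) * a j) := by
    have hmain : ∑ k ∈ Finset.Icc 1 p, Real.logb 2 (P (k : ℤ))
        = (∑ j ∈ univ.filter (· < i), (N j : ℝ) *
            (∑ k ∈ Finset.Icc 1 p, Real.logb 2 (F (j, (k : ℤ))))) +
          (∑ j ∈ univ.filter (i < ·), (N j : ℝ) *
            (∑ k ∈ Finset.Icc 1 p, Real.logb 2 (F (j, (k : ℤ))))) := by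
      simp_rw [hlogP, Finset.sum_add_distrib]
      rw [Finset.sum_comm (s := Finset.Icc 1 p), Finset.sum_comm (s := Finset.Icc 1 p)]
      congr 1
      · exact Finset.sum_congr rfl fun j _ => by rw [← Finset.mul_sum]
      · exact Finset.sum_congr rfl fun j _ => by rw [← Finset.mul_sum, hshift j]
    rw [hmain, hsplit, Finset.sum_union hdisj]
    simp_rw [hpa]
  set E : ℝ := 2 * a i + ∑ j ∈ univ.filter (· ≠ i), (C i j : ℝ) * a j with hE
  have hCN : ∀ j ∈ univ.filter (· ≠ i), (C i j : ℝ) = -(N j : ℝ) := by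
    intro j hj
    have hj' : j ≠ i := by simpa using hj
    have h2 : C i j = -(N j : ℤ) := by have := hNval j hj'; omega
    rw [h2]
    push_cast
    ring
  have hEsum : (p : ℝ) * E = ∑ k ∈ Finset.Icc 1 p,
      (Real.logb 2 (1 + (P (k : ℤ) : ℝ)) - Real.logb 2 (P (k : ℤ))) := by
    have hsum1 : ∑ k ∈ Finset.Icc 1 p, Real.logb 2 (1 + (P (k : ℤ) : ℝ))
        = 2 * ((p : ℝ) * a i) := by
      have heq : ∀ k : ℤ, Real.logb 2 (1 + (P k : ℝ))
          = Real.logb 2 (F (i, k)) + Real.logb 2 (F (i, k + 1)) := by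
        intro k
        rw [← Real.logb_mul (hFposR i k).ne' (hFposR i (k + 1)).ne']
        congr 1
        exact_mod_cast (hmesh' k).symm
      simp_rw [heq]
      rw [Finset.sum_add_distrib, hshift i, hpa i]
      ring
    have hsum2 : ∑ k ∈ Finset.Icc 1 p, Real.logb 2 (P (k : ℤ))
        = -((p : ℝ) * ∑ j ∈ univ.filter (· ≠ i), (C i j : ℝ) * a j) := by
      have hneg : -((p : ℝ) * ∑ j ∈ univ.filter (· ≠ i), (C i j : ℝ) * a j)
          = ∑ j ∈ univ.filter (· ≠ i), (N j : ℝ) * ((p : ℝ) * a j) := by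
        rw [Finset.mul_sum, ← Finset.sum_neg_distrib]
        exact Finset.sum_congr rfl fun j hj => by rw [hCN j hj]; ring
      rw [hSsum, ← hneg]
    rw [Finset.sum_sub_distrib, hsum1, hsum2, hE]
    ring
  set B : ℝ := Real.logb 2 (1 + ((2 : ℝ) ^ D)⁻¹) with hB
  have hterm : ∀ k : ℤ,
      0 < Real.logb 2 (1 + (P k : ℝ)) - Real.logb 2 (P k) ∧
      Real.logb 2 (1 + (P k : ℝ)) - Real.logb 2 (P k) ≤ B := by
    intro k
    have h0 : (0 : ℝ) < P k := hPposR k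
    have hterm_eq : Real.logb 2 (1 + (P k : ℝ)) - Real.logb 2 (P k)
        = Real.logb 2 ((1 + (P k : ℝ)) / P k) := by
      rw [Real.logb_div (by linarith) h0.ne']
    have hdiv : (1 + (P k : ℝ)) / P k = 1 + ((P k : ℝ))⁻¹ := by
      field_simp
      ring
    constructor
    · rw [hterm_eq, hdiv]
      apply Real.logb_pos (by norm_num)
      have : (0 : ℝ) < ((P k : ℝ))⁻¹ := by positivity
      linarith
    · rw [hterm_eq, hdiv, hB]
      apply Real.logb_le_logb_of_le (by norm_num)
      · have : (0 : ℝ) < ((P k : ℝ))⁻¹ := by positivity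
        linarith
      · have : ((P k : ℝ))⁻¹ ≤ ((2 : ℝ) ^ D)⁻¹ :=
          inv_anti₀ (by positivity) (hPgeR k)
        linarith
  have hBgoal : Real.logb 2 (1 + 2 ^ (-(d i : ℝ))) = B := by
    rw [hB]
    congr 2
    rw [hdD]
    push_cast
    rw [Real.rpow_neg (by norm_num), Real.rpow_natCast]
  have hppos : (0 : ℝ) < p := by positivity
  have hcard : (Finset.Icc 1 p).card = p := by
    rw [Nat.card_Icc]
    omega
  have hsum_pos : 0 < (p : ℝ) * E := by
    rw [hEsum]
    exact Finset.sum_pos (fun k _ => (hterm (k : ℤ)).1) ⟨1, by simp [Finset.mem_Icc, hp]⟩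
  have hsum_le : (p : ℝ) * E ≤ (p : ℝ) * B := by
    rw [hEsum]
    calc ∑ k ∈ Finset.Icc 1 p,
        (Real.logb 2 (1 + (P (k : ℤ) : ℝ)) - Real.logb 2 (P (k : ℤ)))
        ≤ ∑ k ∈ Finset.Icc 1 p, B := Finset.sum_le_sum (fun k _ => (hterm (k : ℤ)).2)
      _ = (p : ℝ) * B := by rw [Finset.sum_const, hcard, nsmul_eq_mul]
  constructor
  · nlinarith
  · rw [hBgoal]
    nlinarith
end

section
/- Every p-periodic positive integral frieze F of type A₂ (satisfying F(0,k)F(0,k+1)=1+F(1,k) and F(1,k)F(1,k+1)=1+F(0,k+1)) has at least one entry equal to 1. -/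
/-- Every p-periodic positive integral frieze of type A₂ has an entry equal to 1. -/
theorem stmt_15 (p : ℕ) (hp : 1 ≤ p) (F : Fin 2 × ℤ → ℤ)
    (hpos : ∀ i k, 1 ≤ F (i, k))
    (hper : ∀ i (k : ℤ), F (i, k + p) = F (i, k))
    (h0 : ∀ k : ℤ, F (0, k) * F (0, k + 1) = 1 + F (1, k))
    (h1 : ∀ k : ℤ, F (1, k) * F (1, k + 1) = 1 + F (0, k + 1)) :
    ∃ i k, F (i, k) = 1 := by
  by_contra h
  push_neg at h
  have h2 : ∀ i k, 2 ≤ F (i, k) := by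
    intro i k
    have := hpos i k
    have := h i k
    omega
  have key : ∀ k : ℤ, F (1, k + 1) + 2 ≤ F (1, k) := by
    intro k
    have e0 := h0 k
    have e1 := h1 k
    have a := h2 0 k
    have b := h2 0 (k + 1)
    have c := h2 1 k
    have d := h2 1 (k + 1)
    nlinarith
  have step : ∀ n : ℕ, F (1, (n : ℤ)) + 2 * n ≤ F (1, 0) := by
    intro n
    induction n with
    | zero => simp
    | succ m ih =>
      have hk := key (m : ℤ)
      push_cast
      push_cast at ih
      linarith
  have hp' := step p
  have hper' : F (1, (p : ℤ)) = F (1, 0) := by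
    have := hper 1 0
    simpa using this
  have hp1 : (1 : ℤ) ≤ (p : ℤ) := by exact_mod_cast hp
  linarith
end
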